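/- There exist constants c, C, K > 0 such that the following holds: for all positive integers n, m and all p ∈ (0,1) with np ≥ K, p·log n ≤ 1/K and |n − m| ≤ √(n log n), if X ∼ Bin(n,p) and Y ∼ Bin(m,p) are independent, then c/√(np) ≤ ℙ[X = Y] ≤ C/√(np). -/

import Mathlib

open MeasureTheory ProbabilityTheory Finset

/-- The Bernoulli(p) measure on `Bool`. -/
noncomputable def bernoulliMeasure (p : ℝ) : Measure Bool :=
  p.toNNReal • Measure.dirac true + (1 - p).toNNReal • Measure.dirac false

instance (p : ℝ) : IsFiniteMeasure (bernoulliMeasure p) := by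
  unfold _root_.bernoulliMeasure; infer_instance

/-- The binomial distribution `Bin(n,p)`: the law of the number of successes in `n`
independent Bernoulli(p) trials. -/
noncomputable def binomMeasure (n : ℕ) (p : ℝ) : Measure ℕ :=
  Measure.map (fun f : Fin n → Bool => (univ.filter fun i => f i = true).card)
    (Measure.pi fun _ : Fin n => bernoulliMeasure p)

instance (n : ℕ) (p : ℝ) : IsFiniteMeasure (binomMeasure n p) :=
  Measure.isFiniteMeasure_map _ _

/-!
Write `b n k = C(n,k) pᵏ (1-p)ⁿ⁻ᵏ`, `s = √(np)`, so that `ℙ[X = Y] = ∑ₖ b n k · b m k`.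
The ratio `b n (k+1) / b n k = (n-k)p / ((k+1)(1-p))` is at least `1` before the mode
`⌊(n+1)p⌋` and at most `1` after it, and is `1 + O(1/s)` while `|k - np| ≤ 2s`; hence on this
window of `Θ(s)` integers, which contains the mode, `b n` varies by a bounded factor. Total
mass `1` then bounds the mode, hence every `b n k`, by `O(1/s)`; Chebyshev puts mass `≥ 3/4` on
the window, so `b n k = Ω(1/s)` on all of it. Finally `p log n ≤ 1/K` gives
`|np - mp| = O(s/√K)`, so the windows of `n` and `m` share `Θ(s)` points.
-/

noncomputable def binomProb (n : ℕ) (p : ℝ) (k : ℕ) : ℝ :=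
  n.choose k * p ^ k * (1 - p) ^ (n - k)

section binomProb

variable {n k : ℕ} {p : ℝ}

lemma binomProb_nonneg (hp₀ : 0 ≤ p) (hp₁ : p ≤ 1) : 0 ≤ binomProb n p k := by
  have : 0 ≤ 1 - p := by linarith
  unfold binomProb; positivity

lemma binomProb_of_lt (h : n < k) : binomProb n p k = 0 := by
  simp [binomProb, Nat.choose_eq_zero_of_lt h]

lemma binomProb_eq_eval_bernsteinPolynomial :
    binomProb n p k = (bernsteinPolynomial ℝ n k).eval p := by
  simp [binomProb, bernsteinPolynomial]

lemma sum_binomProb : ∑ k ∈ range (n + 1), binomProb n p k = 1 := by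
  simpa [binomProb_eq_eval_bernsteinPolynomial, Polynomial.eval_finsetSum] using
    congrArg (Polynomial.eval p) (bernsteinPolynomial.sum ℝ n)

lemma sum_sq_mul_binomProb :
    ∑ k ∈ range (n + 1), (n * p - k) ^ 2 * binomProb n p k = n * p * (1 - p) := by
  simpa [binomProb_eq_eval_bernsteinPolynomial, Polynomial.eval_finsetSum, mul_assoc] using
    congrArg (Polynomial.eval p) (bernsteinPolynomial.variance ℝ n)

lemma sum_binomProb_le_one (hp₀ : 0 ≤ p) (hp₁ : p ≤ 1) (s : Finset ℕ) :
    ∑ k ∈ s, binomProb n p k ≤ 1 := by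
  calc ∑ k ∈ s, binomProb n p k = ∑ k ∈ s with k ≤ n, binomProb n p k :=
        (sum_filter_of_ne fun k _ hk => by_contra fun hkn => hk (binomProb_of_lt (by omega))).symm
    _ ≤ ∑ k ∈ range (n + 1), binomProb n p k :=
        sum_le_sum_of_subset_of_nonneg (fun k hk => by simp at hk ⊢; omega)
          fun _ _ _ => binomProb_nonneg hp₀ hp₁
    _ = 1 := sum_binomProb

lemma binomProb_succ_mul (n k : ℕ) (p : ℝ) :
    binomProb n p (k + 1) * ((k + 1) * (1 - p)) = binomProb n p k * ((n - k) * p) := by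
  rcases lt_or_ge k n with hkn | hnk
  · have hchoose : (n.choose (k + 1) : ℝ) * (k + 1) = n.choose k * (n - k) := by
      rw [← Nat.cast_sub hkn.le]; exact_mod_cast Nat.choose_succ_right_eq n k
    obtain ⟨d, rfl⟩ : ∃ d, n = k + 1 + d := ⟨n - (k + 1), by omega⟩
    simp only [binomProb, show k + 1 + d - k = d + 1 by omega,
      show k + 1 + d - (k + 1) = d by omega]
    linear_combination (p ^ (k + 1) * (1 - p) ^ (d + 1)) * hchoose
  · rcases hnk.eq_or_lt with rfl | hnk
    · simp [binomProb_of_lt (Nat.lt_succ_self n)]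
    · simp [binomProb_of_lt hnk, binomProb_of_lt (hnk.trans (Nat.lt_succ_self k))]

end binomProb

lemma bernoulliMeasure_singleton (p : ℝ) (b : Bool) :
    bernoulliMeasure p {b} = if b then ENNReal.ofReal p else ENNReal.ofReal (1 - p) := by
  cases b <;>
    simp [_root_.bernoulliMeasure, ENNReal.ofReal, ENNReal.smul_def, -Measure.coe_nnreal_smul]

lemma pi_bernoulliMeasure_singleton {n : ℕ} (p : ℝ) (f : Fin n → Bool) :
    Measure.pi (fun _ => bernoulliMeasure p) {f} =
      ENNReal.ofReal p ^ #{i | f i = true} * ENNReal.ofReal (1 - p) ^ (n - #{i | f i = true}) := by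
  have hcard := card_filter_add_card_filter_not (s := (univ : Finset (Fin n))) (fun i => f i = true)
  rw [card_univ, Fintype.card_fin] at hcard
  rw [Measure.pi_singleton]
  simp_rw [bernoulliMeasure_singleton]
  rw [prod_ite, prod_const, prod_const, show #{i | ¬f i = true} = n - #{i | f i = true} by omega]

lemma card_filter_card_filter_eq_choose (n k : ℕ) :
    #{f : Fin n → Bool | #{i | f i = true} = k} = n.choose k := by
  rw [show n.choose k = #(powersetCard k (univ : Finset (Fin n))) by simp]
  refine card_bij' (fun f _ => univ.filter fun i => f i = true) (fun s _ i => decide (i ∈ s))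
    ?_ ?_ ?_ ?_
  · intro f hf
    simpa [mem_powersetCard] using hf
  · intro s hs
    simpa [filter_mem_eq_inter] using (mem_powersetCard.1 hs).2
  · intro f _; funext i; simp
  · intro s _; ext i; simp

lemma binomMeasure_singleton {n : ℕ} {p : ℝ} (hp₀ : 0 ≤ p) (hp₁ : p ≤ 1) (k : ℕ) :
    binomMeasure n p {k} = ENNReal.ofReal (binomProb n p k) := by
  have hpre : (fun f : Fin n → Bool => #{i | f i = true}) ⁻¹' {k} =
      ↑({f | #{i | f i = true} = k} : Finset (Fin n → Bool)) := by
    ext f; simp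
  rw [binomMeasure, Measure.map_apply (measurable_of_countable _) (measurableSet_singleton _), hpre,
    ← sum_measure_singleton, sum_congr rfl fun f hf => by
      rw [pi_bernoulliMeasure_singleton, (mem_filter.1 hf).2],
    sum_const, card_filter_card_filter_eq_choose, nsmul_eq_mul, binomProb,
    ENNReal.ofReal_mul (by positivity), ENNReal.ofReal_mul (by positivity),
    ENNReal.ofReal_pow hp₀, ENNReal.ofReal_pow (by linarith), ENNReal.ofReal_natCast, mul_assoc]

lemma prod_diagonal_eq_tsum {α : Type*} [MeasurableSpace α] [MeasurableSingletonClass α]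
    [Countable α] (μ ν : Measure α) [SFinite ν] :
    (μ.prod ν) {q : α × α | q.1 = q.2} = ∑' a, μ {a} * ν {a} := by
  rw [Measure.prod_apply (Set.to_countable _).measurableSet, lintegral_countable']
  congr 1; ext a
  rw [mul_comm, show Prod.mk a ⁻¹' {q : α × α | q.1 = q.2} = {a} by ext; simp [eq_comm]]

lemma toReal_prod_binomMeasure_diagonal {n m : ℕ} {p : ℝ} (hp₀ : 0 ≤ p) (hp₁ : p ≤ 1) :
    ((binomMeasure n p).prod (binomMeasure m p) {q : ℕ × ℕ | q.1 = q.2}).toReal =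
      ∑ k ∈ range (m + 1), binomProb n p k * binomProb m p k := by
  have hb : ∀ n k, 0 ≤ binomProb n p k := fun _ _ => binomProb_nonneg hp₀ hp₁
  simp_rw [prod_diagonal_eq_tsum, binomMeasure_singleton hp₀ hp₁, ← ENNReal.ofReal_mul (hb _ _)]
  rw [tsum_eq_sum (s := range (m + 1)) fun k hk => by
      simp [binomProb_of_lt (n := m) (show m < k by simpa using hk)],
    ← ENNReal.ofReal_sum_of_nonneg fun k _ => mul_nonneg (hb _ _) (hb _ _),
    ENNReal.toReal_ofReal (sum_nonneg fun k _ => mul_nonneg (hb _ _) (hb _ _))]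

noncomputable def binomMode (n : ℕ) (p : ℝ) : ℕ := ⌊(n + 1) * p⌋₊

lemma abs_binomMode_sub_le_one {n : ℕ} {p : ℝ} (hp₀ : 0 ≤ p) (hp₁ : p ≤ 1) :
    |(binomMode n p : ℝ) - n * p| ≤ 1 := by
  have h₁ := Nat.floor_le (show 0 ≤ (n + 1 : ℝ) * p by positivity)
  have h₂ := Nat.lt_floor_add_one ((n + 1 : ℝ) * p)
  rw [binomMode, abs_le]
  constructor <;> nlinarith

section ratio

variable {n k : ℕ} {p c : ℝ}

lemma mul_binomProb_le_binomProb_succ (hp₀ : 0 ≤ p) (hp₁ : p < 1)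
    (h : c * ((k + 1) * (1 - p)) ≤ (n - k) * p) :
    c * binomProb n p k ≤ binomProb n p (k + 1) := by
  have hD : 0 < ((k : ℝ) + 1) * (1 - p) := by nlinarith
  refine le_of_mul_le_mul_right ?_ hD
  calc c * binomProb n p k * ((k + 1) * (1 - p))
      = binomProb n p k * (c * ((k + 1) * (1 - p))) := by ring
    _ ≤ binomProb n p k * ((n - k) * p) :=
        mul_le_mul_of_nonneg_left h (binomProb_nonneg hp₀ hp₁.le)
    _ = binomProb n p (k + 1) * ((k + 1) * (1 - p)) := (binomProb_succ_mul n k p).symm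

lemma mul_binomProb_succ_le_binomProb (hp₀ : 0 ≤ p) (hp₁ : p < 1)
    (h : c * ((n - k) * p) ≤ (k + 1) * (1 - p)) :
    c * binomProb n p (k + 1) ≤ binomProb n p k := by
  have hD : 0 < ((k : ℝ) + 1) * (1 - p) := by nlinarith
  refine le_of_mul_le_mul_right ?_ hD
  calc c * binomProb n p (k + 1) * ((k + 1) * (1 - p))
      = binomProb n p k * (c * ((n - k) * p)) := by rw [mul_assoc, binomProb_succ_mul]; ring
    _ ≤ binomProb n p k * ((k + 1) * (1 - p)) :=
        mul_le_mul_of_nonneg_left h (binomProb_nonneg hp₀ hp₁.le)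

lemma binomProb_le_binomProb_binomMode (hp₀ : 0 ≤ p) (hp₁ : p < 1) (k : ℕ) :
    binomProb n p k ≤ binomProb n p (binomMode n p) := by
  unfold binomMode
  set k₀ := ⌊(n + 1 : ℝ) * p⌋₊
  rcases le_total k k₀ with hk | hk
  · refine monotoneOn_of_le_add_one (s := Set.Iic k₀) Set.ordConnected_Iic
      (fun i _ _ hi => ?_) hk (Set.mem_Iic.2 le_rfl) hk
    have : (i : ℝ) + 1 ≤ (n + 1) * p := by
      simpa using (Nat.le_floor_iff (by positivity)).1 (Set.mem_Iic.1 hi)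
    simpa using mul_binomProb_le_binomProb_succ (c := 1) hp₀ hp₁ (by linarith)
  · refine antitoneOn_of_add_one_le (s := Set.Ici k₀) Set.ordConnected_Ici
      (fun i _ hi _ => ?_) (Set.mem_Ici.2 le_rfl) hk hk
    have : (n + 1) * p < (i : ℝ) + 1 := by
      have hi : (k₀ : ℝ) ≤ i := by exact_mod_cast Set.mem_Ici.1 hi
      linarith [Nat.lt_floor_add_one ((n + 1 : ℝ) * p)]
    simpa using mul_binomProb_succ_le_binomProb (c := 1) hp₀ hp₁ (by linarith)

end ratio

lemma pow_sub_mul_le_of_forall_mul_le_succ {f : ℕ → ℝ} {c : ℝ} (hc : 0 ≤ c) {j k : ℕ}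
    (hjk : j ≤ k) (hf : ∀ i, j ≤ i → i < k → c * f i ≤ f (i + 1)) :
    c ^ (k - j) * f j ≤ f k := by
  induction k, hjk using Nat.le_induction with
  | base => simp
  | succ k hjk ih =>
    calc c ^ (k + 1 - j) * f j = c * (c ^ (k - j) * f j) := by
          rw [Nat.sub_add_comm hjk, pow_succ]; ring
      _ ≤ c * f k := mul_le_mul_of_nonneg_left (ih fun i hi hik => hf i hi (by omega)) hc
      _ ≤ f (k + 1) := hf k hjk (by omega)

lemma pow_sub_mul_le_of_forall_mul_succ_le {f : ℕ → ℝ} {c : ℝ} (hc : 0 ≤ c) {j k : ℕ}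
    (hjk : j ≤ k) (hf : ∀ i, j ≤ i → i < k → c * f (i + 1) ≤ f i) :
    c ^ (k - j) * f k ≤ f j := by
  induction k, hjk using Nat.le_induction with
  | base => simp
  | succ k hjk ih =>
    calc c ^ (k + 1 - j) * f (k + 1) = c ^ (k - j) * (c * f (k + 1)) := by
          rw [Nat.sub_add_comm hjk, pow_succ]; ring
      _ ≤ c ^ (k - j) * f k := mul_le_mul_of_nonneg_left (hf k hjk (by omega)) (by positivity)
      _ ≤ f j := ih fun i hi hik => hf i hi (by omega)

lemma exp_neg_two_mul_le_one_sub_pow {u : ℝ} (hu₀ : 0 ≤ u) (hu : u ≤ 1 / 2) (d : ℕ) :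
    Real.exp (-(2 * u * d)) ≤ (1 - u) ^ d := by
  -- `(1 - u) (1 + 2u) ≥ 1` for `u ≤ 1/2`, and `1 + 2u ≤ exp (2u)`.
  have h : Real.exp (-(2 * u)) ≤ 1 - u := by
    rw [Real.exp_neg, inv_le_iff_one_le_mul₀ (Real.exp_pos _)]
    nlinarith [Real.add_one_le_exp (2 * u)]
  calc Real.exp (-(2 * u * d)) = Real.exp (-(2 * u)) ^ d := by
        rw [← Real.exp_nat_mul]; ring_nf
    _ ≤ (1 - u) ^ d := pow_le_pow_left₀ (Real.exp_pos _).le h d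

noncomputable def window (x r : ℝ) : Finset ℕ := Icc ⌈x - r⌉₊ ⌊x + r⌋₊

section window

variable {x r : ℝ}

lemma mem_window {k : ℕ} (h : 0 ≤ x + r) : k ∈ window x r ↔ |(k : ℝ) - x| ≤ r := by
  rw [window, mem_Icc, Nat.ceil_le, Nat.le_floor_iff h, abs_sub_le_iff]
  constructor <;> rintro ⟨h₁, h₂⟩ <;> constructor <;> linarith

lemma card_window (hr : 0 ≤ r) (h : 0 ≤ x - r) :
    2 * r - 1 ≤ (#(window x r) : ℝ) ∧ (#(window x r) : ℝ) ≤ 2 * r + 1 := by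
  have hc₁ := Nat.ceil_lt_add_one h
  have hc₂ := Nat.le_ceil (x - r)
  have hf₁ := Nat.floor_le (show 0 ≤ x + r by linarith)
  have hf₂ := Nat.lt_floor_add_one (x + r)
  have hle : ⌈x - r⌉₊ ≤ ⌊x + r⌋₊ + 1 := by
    have : (⌈x - r⌉₊ : ℝ) < ⌊x + r⌋₊ + 2 := by linarith
    exact Nat.lt_succ_iff.1 (by exact_mod_cast this)
  rw [window, Nat.card_Icc, Nat.cast_sub hle]
  push_cast
  constructor <;> linarith

end window

lemma one_sub_le_sum_binomProb_window {n : ℕ} {p r : ℝ} (hp₀ : 0 ≤ p) (hp₁ : p ≤ 1) (hr : 0 < r) :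
    1 - n * p * (1 - p) / r ^ 2 ≤ ∑ k ∈ window (n * p) r, binomProb n p k := by
  set W := window (n * p) r
  have hb : ∀ k, 0 ≤ binomProb n p k := fun k => binomProb_nonneg hp₀ hp₁
  have hfar : ∑ k ∈ range (n + 1) with k ∉ W, binomProb n p k ≤ n * p * (1 - p) / r ^ 2 :=
    calc ∑ k ∈ range (n + 1) with k ∉ W, binomProb n p k
        ≤ ∑ k ∈ range (n + 1) with k ∉ W, (n * p - k) ^ 2 / r ^ 2 * binomProb n p k := by
          refine sum_le_sum fun k hk => le_mul_of_one_le_left (hb k) ?_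
          have hk : r < |(k : ℝ) - n * p| := by
            simpa [W, mem_window (by positivity : 0 ≤ n * p + r)] using (mem_filter.1 hk).2
          rw [one_le_div (by positivity), sq_le_sq, abs_of_pos hr, abs_sub_comm]
          exact hk.le
      _ ≤ ∑ k ∈ range (n + 1), (n * p - k) ^ 2 / r ^ 2 * binomProb n p k :=
          sum_le_sum_of_subset_of_nonneg (filter_subset _ _) fun k _ _ => by
            have := hb k; positivity
      _ = n * p * (1 - p) / r ^ 2 := by
          simp_rw [div_mul_eq_mul_div, ← sum_div, sum_sq_mul_binomProb]
  have hnear : ∑ k ∈ range (n + 1) with k ∈ W, binomProb n p k ≤ ∑ k ∈ W, binomProb n p k :=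
    sum_le_sum_of_subset_of_nonneg (fun k hk => (mem_filter.1 hk).2) fun k _ _ => hb k
  have hsplit := sum_filter_add_sum_filter_not (range (n + 1)) (· ∈ W) (binomProb n p)
  rw [sum_binomProb] at hsplit
  linarith

section nearMean

variable {n : ℕ} {p s : ℝ} (hp₀ : 0 < p) (hp : p ≤ 1 / 2) (hs : 12 ≤ s) (hnp : n * p = s ^ 2)
include hp₀ hp hs hnp

lemma binomProb_step_near_mean {i : ℕ} (hi₁ : n * p - 2 * s ≤ i)
    (hi₂ : (i : ℝ) + 1 ≤ n * p + 2 * s) :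
    (1 - 6 / s) * binomProb n p i ≤ binomProb n p (i + 1) ∧
      (1 - 6 / s) * binomProb n p (i + 1) ≤ binomProb n p i := by
  have hu : 6 / s * (s ^ 2 / 2 - s) = 3 * s - 6 := by field_simp; ring
  have hu₀ : 0 ≤ 6 / s := by positivity
  constructor
  · refine mul_binomProb_le_binomProb_succ hp₀.le (by linarith) ?_
    have h : s ^ 2 / 2 - s ≤ (i + 1) * (1 - p) := by nlinarith
    nlinarith [mul_le_mul_of_nonneg_left h hu₀]
  · refine mul_binomProb_succ_le_binomProb hp₀.le (by linarith) ?_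
    have h : s ^ 2 / 2 - s ≤ n * p - p * i := by nlinarith
    nlinarith [mul_le_mul_of_nonneg_left h hu₀]

lemma exp_neg_mul_binomProb_le {j k : ℕ} (hj : |(j : ℝ) - n * p| ≤ 2 * s)
    (hk : |(k : ℝ) - n * p| ≤ 2 * s) :
    Real.exp (-48) * binomProb n p k ≤ binomProb n p j := by
  -- At most `4s` steps, each losing a factor `1 - 6/s ≥ exp (-12/s)`.
  have hu₀ : 0 ≤ 6 / s := by positivity
  have hu : 6 / s ≤ 1 / 2 := by rw [div_le_iff₀ (by positivity)]; linarith
  have hc : 0 ≤ 1 - 6 / s := by linarith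
  have hpow : ∀ d : ℕ, (d : ℝ) ≤ 4 * s → Real.exp (-48) ≤ (1 - 6 / s) ^ d := fun d hd => by
    refine (Real.exp_le_exp.2 ?_).trans (exp_neg_two_mul_le_one_sub_pow hu₀ hu d)
    have : 6 / s * d ≤ 6 / s * (4 * s) := mul_le_mul_of_nonneg_left hd hu₀
    rw [show 6 / s * (4 * s) = 24 by field_simp; ring] at this
    linarith
  have hb := binomProb_nonneg (n := n) (k := k) hp₀.le (by linarith)
  rw [abs_le] at hj hk
  rcases le_total j k with hjk | hkj
  · have hchain := pow_sub_mul_le_of_forall_mul_succ_le hc hjk fun i hji hik => by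
      have h₁ : (j : ℝ) ≤ i := by exact_mod_cast hji
      have h₂ : (i : ℝ) + 1 ≤ k := by exact_mod_cast hik
      exact (binomProb_step_near_mean hp₀ hp hs hnp (i := i) (by linarith) (by linarith)).2
    refine le_trans (mul_le_mul_of_nonneg_right (hpow _ ?_) hb) hchain
    rw [Nat.cast_sub hjk]; linarith
  · have hchain := pow_sub_mul_le_of_forall_mul_le_succ hc hkj fun i hki hij => by
      have h₁ : (k : ℝ) ≤ i := by exact_mod_cast hki
      have h₂ : (i : ℝ) + 1 ≤ j := by exact_mod_cast hij
      exact (binomProb_step_near_mean hp₀ hp hs hnp (i := i) (by linarith) (by linarith)).1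
    refine le_trans (mul_le_mul_of_nonneg_right (hpow _ ?_) hb) hchain
    rw [Nat.cast_sub hkj]; linarith

lemma exp_neg_mul_binomProb_binomMode_le {k : ℕ} (hk : |(k : ℝ) - n * p| ≤ 2 * s) :
    Real.exp (-48) * binomProb n p (binomMode n p) ≤ binomProb n p k :=
  exp_neg_mul_binomProb_le hp₀ hp hs hnp hk
    ((abs_binomMode_sub_le_one hp₀.le (by linarith)).trans (by linarith))

lemma binomProb_le_exp_div (k : ℕ) : binomProb n p k ≤ Real.exp 48 / (3 * s) := by
  set W := window (n * p) (2 * s)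
  have hcard : 3 * s ≤ #W := by
    have := (card_window (x := n * p) (r := 2 * s) (by linarith) (by nlinarith)).1
    linarith
  have hsum : #W * (Real.exp (-48) * binomProb n p (binomMode n p)) ≤ 1 :=
    calc #W * (Real.exp (-48) * binomProb n p (binomMode n p))
        = ∑ _j ∈ W, Real.exp (-48) * binomProb n p (binomMode n p) := by
          rw [sum_const, nsmul_eq_mul]
      _ ≤ ∑ j ∈ W, binomProb n p j :=
          sum_le_sum fun j hj =>
            exp_neg_mul_binomProb_binomMode_le hp₀ hp hs hnp ((mem_window (by nlinarith)).1 hj)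
      _ ≤ 1 := sum_binomProb_le_one hp₀.le (by linarith) W
  have hb := binomProb_nonneg (n := n) (k := binomMode n p) hp₀.le (by linarith)
  calc binomProb n p k ≤ binomProb n p (binomMode n p) :=
        binomProb_le_binomProb_binomMode hp₀.le (by linarith) k
    _ = Real.exp 48 * (Real.exp (-48) * binomProb n p (binomMode n p)) := by
        rw [← mul_assoc, ← Real.exp_add]; simp
    _ ≤ Real.exp 48 / (3 * s) := by
        rw [le_div_iff₀ (by positivity), mul_assoc]
        refine mul_le_of_le_one_right (Real.exp_pos _).le ?_
        nlinarith [mul_le_mul_of_nonneg_right hcard (by positivity :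
          0 ≤ Real.exp (-48) * binomProb n p (binomMode n p))]

lemma exp_div_le_binomProb {k : ℕ} (hk : |(k : ℝ) - n * p| ≤ 2 * s) :
    Real.exp (-48) / (6 * s) ≤ binomProb n p k := by
  set W := window (n * p) (2 * s)
  have hmass : 3 / 4 ≤ ∑ j ∈ W, binomProb n p j := by
    have := one_sub_le_sum_binomProb_window (n := n) hp₀.le (by linarith)
      (show 0 < 2 * s by linarith)
    have : n * p * (1 - p) / (2 * s) ^ 2 ≤ 1 / 4 := by
      rw [div_le_iff₀ (by positivity)]; nlinarith
    linarith
  have hcard := (card_window (x := n * p) (r := 2 * s) (by linarith) (by nlinarith)).2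
  have hsum : ∑ j ∈ W, binomProb n p j ≤ #W * binomProb n p (binomMode n p) := by
    rw [← nsmul_eq_mul]
    exact sum_le_card_nsmul _ _ _ fun j _ =>
      binomProb_le_binomProb_binomMode hp₀.le (by linarith) j
  have hmode : 1 / (6 * s) ≤ binomProb n p (binomMode n p) := by
    rw [div_le_iff₀ (by positivity)]
    nlinarith [binomProb_nonneg (n := n) (k := binomMode n p) hp₀.le (by linarith)]
  calc Real.exp (-48) / (6 * s) = Real.exp (-48) * (1 / (6 * s)) := by ring
    _ ≤ Real.exp (-48) * binomProb n p (binomMode n p) :=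
        mul_le_mul_of_nonneg_left hmode (Real.exp_pos _).le
    _ ≤ binomProb n p k := exp_neg_mul_binomProb_binomMode_le hp₀ hp hs hnp hk

end nearMean

lemma le_sum_binomProb_mul {n m : ℕ} {p s t : ℝ} (hp₀ : 0 < p) (hp : p ≤ 1 / 2) (hs : 16 ≤ s)
    (hnp : n * p = s ^ 2) (ht₀ : 0 ≤ t) (hmp : m * p = t ^ 2) (hnm : |n * p - m * p| ≤ s / 2) :
    Real.exp (-96) / (72 * s) ≤ ∑ k ∈ range (m + 1), binomProb n p k * binomProb m p k := by
  rw [abs_le] at hnm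
  have ht₁ : 3 / 4 * s ≤ t := by nlinarith
  have ht₂ : t ≤ 2 * s := by nlinarith
  set W := window (n * p) s
  have hmem : ∀ k ∈ W, |(k : ℝ) - n * p| ≤ s := fun k hk => (mem_window (by nlinarith)).1 hk
  have hterm : ∀ k ∈ W, Real.exp (-96) / (72 * s ^ 2) ≤ binomProb n p k * binomProb m p k := by
    intro k hk
    have hk := abs_le.1 (hmem k hk)
    have hn := exp_div_le_binomProb hp₀ hp (by linarith) hnp (k := k)
      (abs_le.2 ⟨by linarith, by linarith⟩)
    have hm := exp_div_le_binomProb hp₀ hp (by linarith) hmp (k := k)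
      (abs_le.2 ⟨by linarith, by linarith⟩)
    have hm' : Real.exp (-48) / (12 * s) ≤ Real.exp (-48) / (6 * t) :=
      div_le_div_of_nonneg_left (Real.exp_pos _).le (by linarith) (by linarith)
    calc Real.exp (-96) / (72 * s ^ 2)
          = Real.exp (-48) / (6 * s) * (Real.exp (-48) / (12 * s)) := by
          rw [div_mul_div_comm, ← Real.exp_add]; ring_nf
      _ ≤ binomProb n p k * binomProb m p k :=
          mul_le_mul hn (hm'.trans hm) (by positivity) (binomProb_nonneg hp₀.le (by linarith))
  have hcard : s ≤ #W := by
    have := (card_window (x := n * p) (r := s) (by linarith) (by nlinarith)).1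
    linarith
  have hsub : W ⊆ range (m + 1) := fun k hk => by
    have hk := abs_le.1 (hmem k hk)
    have : (k : ℝ) ≤ m := by nlinarith
    exact mem_range.2 (Nat.lt_succ_of_le (by exact_mod_cast this))
  calc Real.exp (-96) / (72 * s) = s * (Real.exp (-96) / (72 * s ^ 2)) := by
        field_simp
    _ ≤ #W * (Real.exp (-96) / (72 * s ^ 2)) :=
        mul_le_mul_of_nonneg_right hcard (by positivity)
    _ ≤ ∑ k ∈ W, binomProb n p k * binomProb m p k := by
        rw [← nsmul_eq_mul]; exact card_nsmul_le_sum _ _ _ hterm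
    _ ≤ ∑ k ∈ range (m + 1), binomProb n p k * binomProb m p k :=
        sum_le_sum_of_subset_of_nonneg hsub fun k _ _ =>
          mul_nonneg (binomProb_nonneg hp₀.le (by linarith)) (binomProb_nonneg hp₀.le (by linarith))

lemma sum_binomProb_mul_le {n : ℕ} {p s : ℝ} (hp₀ : 0 < p) (hp : p ≤ 1 / 2) (hs : 12 ≤ s)
    (hnp : n * p = s ^ 2) (m : ℕ) :
    ∑ k ∈ range (m + 1), binomProb n p k * binomProb m p k ≤ Real.exp 48 / (3 * s) :=
  calc ∑ k ∈ range (m + 1), binomProb n p k * binomProb m p k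
      ≤ ∑ k ∈ range (m + 1), Real.exp 48 / (3 * s) * binomProb m p k :=
        sum_le_sum fun k _ => mul_le_mul_of_nonneg_right
          (binomProb_le_exp_div hp₀ hp hs hnp k) (binomProb_nonneg hp₀.le (by linarith))
    _ = Real.exp 48 / (3 * s) := by rw [← mul_sum, sum_binomProb, mul_one]

lemma abs_mul_sub_mul_le_sqrt_mul_sqrt {n m : ℕ} {p ε : ℝ} (hp₀ : 0 ≤ p)
    (hlog : p * Real.log n ≤ ε) (hnm : |(n : ℝ) - m| ≤ Real.sqrt (n * Real.log n)) :
    |n * p - m * p| ≤ Real.sqrt (n * p) * Real.sqrt ε := by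
  calc |n * p - m * p| = |(n : ℝ) - m| * p := by rw [← sub_mul, abs_mul, abs_of_nonneg hp₀]
    _ ≤ Real.sqrt (n * Real.log n) * Real.sqrt (p ^ 2) := by
        rw [Real.sqrt_sq hp₀]; exact mul_le_mul_of_nonneg_right hnm hp₀
    _ = Real.sqrt (n * p * (p * Real.log n)) := by
        rw [← Real.sqrt_mul' _ (sq_nonneg p)]; ring_nf
    _ ≤ Real.sqrt (n * p * ε) :=
        Real.sqrt_le_sqrt (mul_le_mul_of_nonneg_left hlog (by positivity))
    _ = Real.sqrt (n * p) * Real.sqrt ε := Real.sqrt_mul (by positivity) ε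

/-- **Point probability of the difference of two binomials.**
There are constants `c, C, K > 0` such that for all positive integers `n, m` and all
`p ∈ (0,1)` with `np ≥ K`, `p log n ≤ 1/K` and `|n - m| ≤ √(n log n)`, if
`X ∼ Bin(n,p)` and `Y ∼ Bin(m,p)` are independent then
`c/√(np) ≤ ℙ[X = Y] ≤ C/√(np)`. -/
theorem binomial_equal_prob :
    ∃ c C K : ℝ, 0 < c ∧ 0 < C ∧ 0 < K ∧
      ∀ n m : ℕ, 0 < n → 0 < m → ∀ p : ℝ, p ∈ Set.Ioo (0 : ℝ) 1 →
        K ≤ n * p → p * Real.log n ≤ 1 / K →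
        |(n : ℝ) - m| ≤ Real.sqrt (n * Real.log n) →
        c / Real.sqrt (n * p) ≤
            (((binomMeasure n p).prod (binomMeasure m p)) {q : ℕ × ℕ | q.1 = q.2}).toReal ∧
        (((binomMeasure n p).prod (binomMeasure m p)) {q : ℕ × ℕ | q.1 = q.2}).toReal ≤
            C / Real.sqrt (n * p) := by
  refine ⟨Real.exp (-96) / 72, Real.exp 48 / 3, 256, by positivity, by positivity, by norm_num, ?_⟩
  intro n m _ _ p ⟨hp₀, hp₁⟩ hK hlog hnm
  have hlog₁ : 1 ≤ Real.log n := by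
    rw [Real.le_log_iff_exp_le (by nlinarith)]
    nlinarith [Real.exp_one_lt_d9]
  have hp : p ≤ 1 / 2 := by nlinarith
  set s := Real.sqrt (n * p)
  have hnp : n * p = s ^ 2 := (Real.sq_sqrt (by positivity)).symm
  have hs : 16 ≤ s := Real.le_sqrt_of_sq_le (by linarith)
  have hmean : |n * p - m * p| ≤ s / 2 := by
    have := abs_mul_sub_mul_le_sqrt_mul_sqrt hp₀.le hlog hnm
    rw [show (1 / 256 : ℝ) = (1 / 16) ^ 2 by norm_num, Real.sqrt_sq (by norm_num)] at this
    linarith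
  rw [toReal_prod_binomMeasure_diagonal hp₀.le hp₁.le, div_div, div_div]
  exact ⟨le_sum_binomProb_mul hp₀ hp hs hnp (Real.sqrt_nonneg _)
      (Real.sq_sqrt (by positivity)).symm hmean,
    sum_binomProb_mul_le hp₀ hp (by linarith) hnp m⟩
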